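/- Let n ≥ 2 and F_i = 2^{i-1} · i!. The map f_n : F_n → {0, 1, ..., 2^{n-1}·n! − 1} defined by f_n(π) = Σ_{i=1}^{n−1} inv_i(π) · F_{n−i} is a bijection. -/

import Mathlib

/-- A signed permutation `π` of `[n]`: `π(i) = ε i · σ(i)` with `σ` a permutation
of `[n]` and signs `ε i ∈ {±1}`.  Positions are encoded by `Fin n`
(position `i ∈ [n]` corresponds to `⟨i-1, _⟩ : Fin n`). -/
structure SignedPerm (n : ℕ) where
  σ : Equiv.Perm (Fin n)
  ε : Fin n → ℤ
  hε : ∀ i, ε i = 1 ∨ ε i = -1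

namespace SignedPerm

variable {n : ℕ}

/-- The signed value `π(i) = ε i · σ(i) ∈ {-n, …, -1, 1, …, n}` (1-based value). -/
def val (π : SignedPerm n) (i : Fin n) : ℤ :=
  π.ε i * ((π.σ i : ℕ) + 1)

/-- The standard basis vector `e i` of `ℝ^n`. -/
def e (i : Fin n) : Fin n → ℝ := Pi.single i 1

/-- The action of a signed permutation on `ℝ^n`, determined by
`π · e i = ε i · e (σ i)`. -/
def act (π : SignedPerm n) (v : Fin n → ℝ) : Fin n → ℝ :=
  fun j => (π.ε (π.σ.symm j) : ℝ) * v (π.σ.symm j)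

/-- The positive root system `Φₙ⁺ = {e k, e i + e j, e i - e j : k, i < j}` of `Bₙ`. -/
def PhiPos (n : ℕ) : Set (Fin n → ℝ) :=
  {v | (∃ k : Fin n, v = e k) ∨ ∃ i j : Fin n, i < j ∧ (v = e i + e j ∨ v = e i - e j)}

/-- The positive roots `Φₙ,ᵢ⁺ = {e i, e i + e j, e i - e j : i < j ≤ n}`. -/
def PhiPosI (n : ℕ) (i : Fin n) : Set (Fin n → ℝ) :=
  {v | v = e i ∨ ∃ j : Fin n, i < j ∧ (v = e i + e j ∨ v = e i - e j)}

/-- The `i`-inversion number `invᵢ π = #{v ∈ Φₙ,ᵢ⁺ : π · v ∈ -Φₙ⁺}`. -/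
noncomputable def invi (i : Fin n) (π : SignedPerm n) : ℕ :=
  Set.ncard {v | v ∈ PhiPosI n i ∧ -(π.act v) ∈ PhiPos n}

/-- The inversion number `inv π = #{v ∈ Φₙ⁺ : π · v ∈ -Φₙ⁺}`. -/
noncomputable def inv (π : SignedPerm n) : ℕ :=
  Set.ncard {v | v ∈ PhiPos n ∧ -(π.act v) ∈ PhiPos n}

end SignedPerm

/-!
Writing `π(i) = ε i · σ(i)` and `rᵢ = #{j > i | σ j < σ i}` (the Lehmer code of `σ`), one finds
`invᵢ π = rᵢ` if `ε i = 1` and `invᵢ π = 2(n - 1 - i) + 1 - rᵢ` if `ε i = -1`. As the Lehmer code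
determines `σ`, the digits `(invᵢ π)ᵢ` determine `π`, and counting shows that they range over all
of `∏ᵢ [0, 2(n - i))`. The last digit lies in `{0, 1}` and `inv π = ∑ᵢ invᵢ π`, so on `Fₙ` it is
the parity of the other digits, which range freely; `fₙ` reads these `n - 1` digits as a
mixed-radix numeral with radices `2n, 2(n - 1), …, 4`.
-/

open Finset Nat

variable {n : ℕ}

lemma Finset.injOn_card_filter_lt {α : Type*} [LinearOrder α] (s : Finset α) :
    Set.InjOn (fun x => #{y ∈ s | y < x}) s := by
  refine StrictMonoOn.injOn fun x hx y _ hxy => card_lt_card ?_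
  refine (ssubset_iff_of_subset fun z hz => ?_).2 ⟨x, mem_filter.2 ⟨hx, hxy⟩, by simp⟩
  simp only [mem_filter] at hz ⊢
  exact ⟨hz.1, hz.2.trans hxy⟩

lemma Set.InjOn.ncard_sep_image {α β : Type*} [Fintype β] {g : β → α}
    {D : Set β} [DecidablePred (· ∈ D)] (hg : Set.InjOn g D) (Q : α → Prop) [DecidablePred Q] :
    {v | v ∈ g '' D ∧ Q v}.ncard = #{x | x ∈ D ∧ Q (g x)} := by
  have : {v | v ∈ g '' D ∧ Q v} = g '' {x | x ∈ D ∧ Q (g x)} := by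
    ext
    simp only [Set.mem_image, Set.mem_ofPred_eq]
    grind
  rw [this, (hg.mono fun x hx => hx.1).ncard_image, Set.ncard_eq_toFinset_card',
    Set.toFinset_ofPred]

lemma Equiv.bijOn_val {α : Type*} {N : ℕ} (e : α ≃ Fin N) :
    Set.BijOn (fun a => (e a : ℕ)) _root_.Set.univ {x | x < N} :=
  ⟨fun a _ => (e a).isLt, fun _ _ _ _ h => e.injective (Fin.ext h),
    fun x hx => ⟨e.symm ⟨x, hx⟩, trivial, by simp⟩⟩

lemma Fin.bijOn_init_even_sum {m : ℕ} {b : Fin (m + 1) → ℕ} (hb : b (Fin.last m) = 2) :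
    Set.BijOn Fin.init {q : (i : Fin (m + 1)) → Fin (b i) | Even (∑ i, (q i : ℕ))} Set.univ := by
  have hsum (q : (i : Fin (m + 1)) → Fin (b i)) :
      ∑ i, (q i : ℕ) = ∑ i, (Fin.init q i : ℕ) + q (Fin.last m) :=
    Fin.sum_univ_castSucc _
  refine ⟨fun _ _ => trivial, fun q hq q' hq' h => ?_, fun t _ => ?_⟩
  · have hlast : (q (Fin.last m) : ℕ) = q' (Fin.last m) := by
      have := (q (Fin.last m)).isLt
      have := (q' (Fin.last m)).isLt
      simp only [Set.mem_ofPred_eq, hsum, h, Nat.even_iff] at hq hq'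
      omega
    rw [← Fin.snoc_init_self q, ← Fin.snoc_init_self q', h, Fin.ext hlast]
  · refine ⟨Fin.snoc t ⟨(∑ i, (t i : ℕ)) % 2, hb ▸ Nat.mod_lt _ (by omega)⟩, ?_,
      Fin.init_snoc _ _⟩
    simp only [Set.mem_ofPred_eq, hsum, Fin.init_snoc, Fin.snoc_last, Nat.even_iff]
    omega

lemma prod_two_mul_add_two (k : ℕ) : ∏ j : Fin k, 2 * ((j : ℕ) + 2) = 2 ^ k * (k + 1)! := by
  rw [Fin.prod_univ_eq_prod_range (fun j => 2 * (j + 2))]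
  induction k with
  | zero => simp
  | succ k ih => rw [prod_range_succ, ih, factorial_succ (k + 1)]; ring

namespace Equiv.Perm

def lehmerCode (σ : Equiv.Perm (Fin n)) (i : Fin n) : ℕ := #{j ∈ Ioi i | σ j < σ i}

lemma lehmerCode_le (σ : Equiv.Perm (Fin n)) (i : Fin n) : lehmerCode σ i ≤ n - 1 - i :=
  (card_filter_le _ _).trans_eq (Fin.card_Ioi i)

lemma lehmerCode_eq_card_filter_not_lt (σ : Equiv.Perm (Fin n)) (i : Fin n) :
    lehmerCode σ i = #{j ∈ Ioi i | ¬σ i < σ j} := by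
  refine congrArg card (filter_congr fun j hj => ?_)
  have : σ j ≠ σ i := σ.injective.ne (mem_Ioi.1 hj).ne'
  exact ⟨lt_asymm, fun h => lt_of_le_of_ne (not_lt.1 h) this⟩

lemma lehmerCode_eq_card_compl_image (σ : Equiv.Perm (Fin n)) (i : Fin n) :
    lehmerCode σ i = #{x ∈ ((Iio i).image σ)ᶜ | x < σ i} := by
  rw [lehmerCode, ← card_image_of_injective _ σ.injective]
  congr 1
  ext x
  obtain ⟨k, rfl⟩ := σ.surjective x
  simp only [mem_image, mem_filter, mem_Ioi, mem_compl, mem_Iio, σ.injective.eq_iff]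
  grind

-- Strong induction on `i`: `σ i` is the element of `((Iio i).image σ)ᶜ` with exactly
-- `lehmerCode σ i` smaller elements in that set.
lemma lehmerCode_injective : Function.Injective (lehmerCode (n := n)) := by
  intro σ τ h
  refine Equiv.ext fun i => ?_
  induction i using WellFoundedLT.induction with
  | _ i ih =>
  have himage : (Iio i).image σ = (Iio i).image τ :=
    image_congr fun j hj => ih j (mem_Iio.1 hj)
  have hmem (ρ : Equiv.Perm (Fin n)) : ρ i ∈ ((Iio i).image ρ)ᶜ := by
    simp [ρ.injective.eq_iff]
  refine injOn_card_filter_lt _ (hmem σ) (himage ▸ hmem τ) ?_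
  simp only
  rw [← lehmerCode_eq_card_compl_image, himage, ← lehmerCode_eq_card_compl_image, h]

end Equiv.Perm

namespace SignedPerm

lemma e_apply (i j : Fin n) : e i j = if j = i then 1 else 0 := Pi.single_apply i 1 j

lemma act_e (π : SignedPerm n) (i : Fin n) : π.act (e i) = (π.ε i : ℝ) • e (π.σ i) := by
  ext j
  obtain ⟨k, rfl⟩ := π.σ.surjective j
  by_cases h : k = i <;> simp [act, e_apply, h]

lemma act_add (π : SignedPerm n) (v w : Fin n → ℝ) : π.act (v + w) = π.act v + π.act w := by
  ext j; simp [act, mul_add]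

lemma act_sub (π : SignedPerm n) (v w : Fin n → ℝ) : π.act (v - w) = π.act v - π.act w := by
  ext j; simp [act, mul_sub]

lemma smul_e_mem_PhiPos_iff {s : ℤ} (hs : s = 1 ∨ s = -1) (a : Fin n) :
    (s : ℝ) • e a ∈ PhiPos n ↔ s = 1 := by
  constructor
  · rintro (⟨i, hv⟩ | ⟨i, j, hij, hv | hv⟩) <;>
    · have h1 := congrFun hv a
      have h2 := congrFun hv i
      simp only [Pi.smul_apply, Pi.add_apply, Pi.sub_apply, e_apply, smul_eq_mul] at h1 h2
      rcases hs with rfl | rfl <;> push_cast at h1 h2 <;> grind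
  · rintro rfl
    exact Or.inl ⟨a, by simp⟩

lemma smul_add_smul_mem_PhiPos_iff {s t : ℤ} (hs : s = 1 ∨ s = -1) (ht : t = 1 ∨ t = -1)
    {a b : Fin n} (hab : a ≠ b) :
    (s : ℝ) • e a + (t : ℝ) • e b ∈ PhiPos n ↔ if a < b then s = 1 else t = 1 := by
  constructor
  · rintro (⟨i, hv⟩ | ⟨i, j, hij, hv | hv⟩) <;>
    · have h1 := congrFun hv a
      have h2 := congrFun hv b
      simp only [Pi.smul_apply, Pi.add_apply, Pi.sub_apply, e_apply, smul_eq_mul] at h1 h2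
      rcases hs with rfl | rfl <;> rcases ht with rfl | rfl <;> push_cast at h1 h2 <;> grind
  · intro h
    rcases lt_or_gt_of_ne hab with hlt | hlt
    · simp only [hlt, if_true] at h
      subst h
      rcases ht with rfl | rfl
      · exact Or.inr ⟨a, b, hlt, Or.inl (by simp)⟩
      · exact Or.inr ⟨a, b, hlt, Or.inr (by simp [sub_eq_add_neg])⟩
    · simp only [hlt.not_gt, if_false] at h
      subst h
      rcases hs with rfl | rfl
      · exact Or.inr ⟨b, a, hlt, Or.inl (by simp [add_comm])⟩
      · exact Or.inr ⟨b, a, hlt, Or.inr (by simp [sub_eq_add_neg, add_comm])⟩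

-- Parametrising the positive roots by a finite type turns the `Set.ncard`s in `invi` and `inv`
-- into `Finset` counts.
def root : Fin n × Option (Fin n × Bool) → (Fin n → ℝ)
  | (i, none) => e i
  | (i, some (j, true)) => e i + e j
  | (i, some (j, false)) => e i - e j

def IsRootIndex (p : Fin n × Option (Fin n × Bool)) : Prop := ∀ q ∈ p.2, p.1 < q.1

lemma PhiPosI_eq_image (i : Fin n) :
    PhiPosI n i = (fun x => root (i, x)) '' {x | IsRootIndex (i, x)} := by
  ext v
  constructor
  · rintro (rfl | ⟨j, hij, rfl | rfl⟩)
    · exact ⟨none, by simp [IsRootIndex], rfl⟩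
    · exact ⟨some (j, true), by simpa [IsRootIndex] using hij, rfl⟩
    · exact ⟨some (j, false), by simpa [IsRootIndex] using hij, rfl⟩
  · rintro ⟨_ | ⟨j, _ | _⟩, hx, rfl⟩
    · exact Or.inl rfl
    · exact Or.inr ⟨j, hx _ rfl, Or.inr rfl⟩
    · exact Or.inr ⟨j, hx _ rfl, Or.inl rfl⟩

lemma PhiPos_eq_iUnion : PhiPos n = ⋃ i, PhiPosI n i := by
  ext v
  simp only [PhiPos, PhiPosI, Set.mem_iUnion, Set.mem_ofPred_eq]
  grind

lemma PhiPos_eq_image : PhiPos n = root '' {p | IsRootIndex p} := by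
  rw [PhiPos_eq_iUnion]
  ext v
  simp [PhiPosI_eq_image]

lemma root_apply_self {p : Fin n × Option (Fin n × Bool)} (hp : IsRootIndex p) :
    root p p.1 = 1 := by
  rcases p with ⟨i, _ | ⟨j, _ | _⟩⟩
  · simp [root, e_apply]
  all_goals simp [root, e_apply, (hp _ rfl).ne]

lemma root_apply_of_lt {p : Fin n × Option (Fin n × Bool)} (hp : IsRootIndex p) {k : Fin n}
    (hk : k < p.1) : root p k = 0 := by
  rcases p with ⟨i, _ | ⟨j, _ | _⟩⟩
  · simp [root, e_apply, hk.ne]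
  all_goals simp [root, e_apply, hk.ne, (hk.trans (hp _ rfl)).ne]

lemma root_injOn : Set.InjOn root {p : Fin n × Option (Fin n × Bool) | IsRootIndex p} := by
  intro p hp q hq h
  have hfst : p.1 = q.1 := by
    by_contra hne
    rcases lt_or_gt_of_ne hne with hlt | hlt
    · simpa [h, root_apply_of_lt hq hlt] using root_apply_self hp
    · simpa [← h, root_apply_of_lt hp hlt] using root_apply_self hq
  rcases p with ⟨i, _ | ⟨j, b⟩⟩ <;> rcases q with ⟨i', _ | ⟨j', b'⟩⟩ <;>
    simp only at hfst <;> subst hfst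
  · rfl
  · have := congrFun h j'
    cases b' <;> simp [root, e_apply, (hq _ rfl).ne'] at this
  · have := congrFun h j
    cases b <;> simp [root, e_apply, (hp _ rfl).ne'] at this
  · have hj : i < j := hp _ rfl
    have hj' : i < j' := hq _ rfl
    have h1 := congrFun h j
    have h2 := congrFun h j'
    cases b <;> cases b' <;> simp only [root, Pi.add_apply, Pi.sub_apply, e_apply] at h1 h2 <;>
      grind

open scoped Classical in
lemma invi_eq_card (π : SignedPerm n) (i : Fin n) :
    invi i π = #{x | IsRootIndex (i, x) ∧ -(π.act (root (i, x))) ∈ PhiPos n} := by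
  rw [invi, PhiPosI_eq_image]
  exact (root_injOn.comp (Prod.mk_right_injective i).injOn fun _ hx => hx).ncard_sep_image _

open scoped Classical in
lemma inv_eq_card (π : SignedPerm n) :
    inv π = #{p | IsRootIndex p ∧ -(π.act (root p)) ∈ PhiPos n} := by
  rw [inv, PhiPos_eq_image]
  exact root_injOn.ncard_sep_image _

lemma inv_eq_sum_invi (π : SignedPerm n) : inv π = ∑ i, invi i π := by
  classical
  simp only [inv_eq_card, invi_eq_card, card_filter, Fintype.sum_prod_type]

lemma neg_act_root_none_mem_iff (π : SignedPerm n) (i : Fin n) :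
    -(π.act (root (i, none))) ∈ PhiPos n ↔ π.ε i = -1 := by
  have := π.hε i
  have hroot : -(π.act (root (i, none))) = ((-π.ε i : ℤ) : ℝ) • e (π.σ i) := by
    simp [root, act_e]
  rw [hroot, smul_e_mem_PhiPos_iff (by omega)]
  omega

lemma neg_act_root_some_mem_iff (π : SignedPerm n) {i j : Fin n} (hij : i ≠ j) (b : Bool) :
    -(π.act (root (i, some (j, b)))) ∈ PhiPos n ↔
      if π.σ i < π.σ j then π.ε i = -1 else if b then π.ε j = -1 else π.ε j = 1 := by
  have := π.hε i
  have := π.hε j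
  have hroot : -(π.act (root (i, some (j, b)))) =
      ((-π.ε i : ℤ) : ℝ) • e (π.σ i) + ((if b then -π.ε j else π.ε j : ℤ) : ℝ) • e (π.σ j) := by
    cases b <;> simp only [root, act_add, act_sub, act_e] <;> push_cast <;> module
  rw [hroot, smul_add_smul_mem_PhiPos_iff (by omega) (by split_ifs <;> omega)
    (π.σ.injective.ne hij)]
  split_ifs <;> omega

lemma invi_eq_sum (π : SignedPerm n) (i : Fin n) :
    invi i π = (if π.ε i = -1 then 1 else 0) +
      ∑ j ∈ Ioi i, if π.σ i < π.σ j then (if π.ε i = -1 then 2 else 0) else 1 := by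
  classical
  -- For `j > i`: if `σ j < σ i` exactly one of `e i ± e j` is inverted, otherwise both or
  -- neither, according to `ε i`.
  have hsome (j : Fin n) : (∑ b : Bool,
      if IsRootIndex (i, some (j, b)) ∧ -(π.act (root (i, some (j, b)))) ∈ PhiPos n then 1 else 0)
      = if i < j then (if π.σ i < π.σ j then (if π.ε i = -1 then 2 else 0) else 1) else 0 := by
    by_cases hij : i < j
    · have := π.hε j
      simp only [IsRootIndex, Option.mem_def, Option.some.injEq, forall_eq', hij, true_and,
        neg_act_root_some_mem_iff π hij.ne, Fintype.sum_bool, if_true, Bool.false_eq_true,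
        if_false]
      split_ifs <;> omega
    · simp [IsRootIndex, hij]
  rw [invi_eq_card, card_filter, Fintype.sum_option, Fintype.sum_prod_type]
  simp only [hsome, ← sum_filter, filter_lt_eq_Ioi]
  simp [IsRootIndex, neg_act_root_none_mem_iff]

lemma invi_eq_lehmerCode (π : SignedPerm n) (i : Fin n) :
    invi i π = if π.ε i = 1 then π.σ.lehmerCode i
      else 2 * (n - 1 - i) + 1 - π.σ.lehmerCode i := by
  have hsplit := card_filter_add_card_filter_not (s := Ioi i) (fun j => π.σ i < π.σ j)
  rw [Fin.card_Ioi, ← Equiv.Perm.lehmerCode_eq_card_filter_not_lt] at hsplit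
  rw [invi_eq_sum, sum_ite, sum_const, sum_const, smul_eq_mul, smul_eq_mul, mul_one,
    ← Equiv.Perm.lehmerCode_eq_card_filter_not_lt]
  have := π.hε i
  split_ifs <;> omega

lemma invi_lt (π : SignedPerm n) (i : Fin n) : invi i π < 2 * (n - i) := by
  have := π.σ.lehmerCode_le i
  rw [invi_eq_lehmerCode]
  split_ifs <;> omega

lemma eps_eq_one_iff_invi_le (π : SignedPerm n) (i : Fin n) :
    π.ε i = 1 ↔ invi i π ≤ n - 1 - i := by
  have := π.σ.lehmerCode_le i
  have := π.hε i
  rw [invi_eq_lehmerCode]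
  split_ifs <;> omega

@[ext]
lemma ext {π π' : SignedPerm n} (hσ : π.σ = π'.σ) (hε : π.ε = π'.ε) : π = π' := by
  cases π
  cases π'
  congr

lemma eq_of_invi_eq {π π' : SignedPerm n} (h : ∀ i, invi i π = invi i π') : π = π' := by
  have hε : π.ε = π'.ε := funext fun i => by
    have := eps_eq_one_iff_invi_le π i
    have := eps_eq_one_iff_invi_le π' i
    have := π.hε i
    have := π'.hε i
    rw [h i] at *
    omega
  refine ext (Equiv.Perm.lehmerCode_injective (funext fun i => ?_)) hε
  have h1 := invi_eq_lehmerCode π i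
  have h2 := invi_eq_lehmerCode π' i
  have := π.σ.lehmerCode_le i
  have := π'.σ.lehmerCode_le i
  rw [← h i, ← hε] at h2
  split_ifs at h1 h2 <;> omega

noncomputable def equivPermProdUnits : SignedPerm n ≃ Equiv.Perm (Fin n) × (Fin n → ℤˣ) where
  toFun π := (π.σ, fun i => (Int.isUnit_iff.2 (π.hε i)).unit)
  invFun p := ⟨p.1, fun i => p.2 i, fun i => Int.isUnit_iff.1 (p.2 i).isUnit⟩
  left_inv π := ext rfl (funext fun i => IsUnit.unit_spec (Int.isUnit_iff.2 (π.hε i)))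
  right_inv _ := Prod.ext rfl (funext fun _ => Units.ext (IsUnit.unit_spec _))

noncomputable instance : Fintype (SignedPerm n) := Fintype.ofEquiv _ equivPermProdUnits.symm

lemma card_eq_two_pow_mul_factorial : Fintype.card (SignedPerm n) = 2 ^ n * n ! := by
  rw [Fintype.card_congr equivPermProdUnits, Fintype.card_prod, Fintype.card_perm,
    Fintype.card_fun, Fintype.card_units_int, Fintype.card_fin, mul_comm]

noncomputable def code (π : SignedPerm n) (i : Fin n) : Fin (2 * (n - i)) :=
  ⟨invi i π, invi_lt π i⟩

lemma code_bijective : Function.Bijective (code (n := n)) := by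
  refine (Fintype.bijective_iff_injective_and_card _).2
    ⟨fun π π' h => eq_of_invi_eq fun i => congrArg Fin.val (congrFun h i), ?_⟩
  rw [card_eq_two_pow_mul_factorial, Fintype.card_pi]
  simp only [Fintype.card_fin]
  rw [Fin.prod_univ_eq_prod_range (fun i => 2 * (n - i)), prod_mul_distrib, prod_const,
    card_range, ← descFactorial_eq_prod_range, descFactorial_self]

lemma bijOn_code_even :
    Set.BijOn code {π : SignedPerm n | Even (inv π)} {q | Even (∑ i, (q i : ℕ))} := by
  convert code_bijective.bijOn_preimage using 1
  ext π
  simp [code, inv_eq_sum_invi]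

end SignedPerm

-- Read from the right, the digit `t k.rev` has radix `2 (k + 2)`, hence place value
-- `∏ j < k, 2 (j + 2) = 2 ^ k (k + 1)!`.
lemma bijOn_mixedRadix (m : ℕ) :
    Set.BijOn (fun t : (i : Fin m) → Fin (2 * (m + 1 - (i.castSucc : ℕ))) =>
        ∑ k : Fin m, (t k.rev : ℕ) * (2 ^ (k : ℕ) * (k + 1)!))
      Set.univ {x | x < 2 ^ m * (m + 1)!} := by
  have hbase (k : Fin m) : 2 * (m + 1 - ((Fin.revPerm.symm k).castSucc : ℕ)) = 2 * (k + 2) := by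
    simp only [Fin.revPerm_symm, Fin.revPerm_apply, Fin.val_castSucc, Fin.val_rev]
    omega
  have hprod : ∏ k : Fin m, 2 * (m + 1 - ((Fin.revPerm.symm k).castSucc : ℕ)) =
      2 ^ m * (m + 1)! := by
    simp only [hbase, prod_two_mul_add_two]
  refine (Equiv.bijOn_val (((Equiv.piCongrLeft' _ Fin.revPerm).trans finPiFinEquiv).trans
    (finCongr hprod))).congr fun t _ => ?_
  simp only [Equiv.trans_apply, finCongr_apply, Fin.val_cast, finPiFinEquiv_apply,
    Equiv.piCongrLeft'_apply, hbase, Fin.val_castLE, prod_two_mul_add_two]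
  rfl

lemma sum_filter_mul_eq_sum_rev (m : ℕ) (d : Fin (m + 1) → ℕ) :
    ∑ i ∈ univ.filter (fun i : Fin (m + 1) => i.val + 1 ≤ m + 1 - 1),
        d i * (2 ^ (m + 1 - 2 - i.val) * (m + 1 - 1 - i.val)!) =
      ∑ k : Fin m, d k.rev.castSucc * (2 ^ (k : ℕ) * (k + 1)!) := by
  rw [sum_filter, Fin.sum_univ_castSucc]
  simp only [Fin.val_castSucc, Fin.val_last, add_tsub_cancel_right, add_le_iff_nonpos_right,
    one_ne_zero, nonpos_iff_eq_zero, if_false, add_zero]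
  refine Fintype.sum_equiv Fin.revPerm _ _ fun i => ?_
  have := i.isLt
  rw [if_pos (by omega), Fin.revPerm_apply, Fin.rev_rev, Fin.val_rev,
    show m + 1 - 2 - i = m - (i + 1) by omega, show m - i = m - (i + 1) + 1 by omega]

open SignedPerm in
/-- With `Fᵢ = 2^(i-1) · i!`, the map
`fₙ(π) = ∑_{i=1}^{n-1} invᵢ(π) · F_{n-i}` is a bijection from the signed even
permutation group `Fₙ ⊆ Bₙ` (those `π` with `inv π` even) onto
`{0, 1, …, 2^(n-1)·n! - 1}` (position `i ∈ [n]` is `i.val + 1` in 1-based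
indexing, so `n - i = n - 1 - i.val` and `(n - i) - 1 = n - 2 - i.val`). -/
theorem f_bijective (n : ℕ) (hn : 2 ≤ n) :
    Set.BijOn
      (fun π : SignedPerm n =>
        ∑ i ∈ Finset.univ.filter (fun i : Fin n => i.val + 1 ≤ n - 1),
          invi i π * (2 ^ (n - 2 - i.val) * Nat.factorial (n - 1 - i.val)))
      {π : SignedPerm n | Even (SignedPerm.inv π)}
      {m : ℕ | m < 2 ^ (n - 1) * Nat.factorial n} := by
  obtain ⟨m, rfl⟩ : ∃ m, n = m + 1 := ⟨n - 1, by omega⟩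
  have hdigits := (Fin.bijOn_init_even_sum (by simp)).comp (bijOn_code_even (n := m + 1))
  refine ((bijOn_mixedRadix m).comp hdigits).congr fun π _ => ?_
  exact (sum_filter_mul_eq_sum_rev m fun i => invi i π).symm
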